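/- arXiv:2006.05786 — 3 statements merged into one kernel-verified Lean document; each statement's English description precedes it below -/
import Mathlib

section
/- Suppose the model assumptions (A1)–(A5) hold in the degenerate case p = 0 (all customers see version 0, so all steps inside the strip are drawn from μ_0), respectively p = 1 (all steps from μ_1), and suppose c_n/n → 0 as n → ∞. Then the empirical conversion rate C_n^{(0)} = L_n^{(0)}/N_n^{(0)} converges almost surely to p_θ under P_0, and C_n^{(1)} = L_n^{(1)}/N_n^{(1)} converges almost surely to p_θ under P_1 (with C_n^{(i)} := 0 on the event {N_n^{(i)} = 0}). -/
/-!
Under `P_i` every visitor belongs to group `i` almost surely, so `N_n^{(i)} = n`. Once the walk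
has reached the ceiling `T = c`, step `k` is a purchase exactly when `θ_k > 0`; and since every
step with `η_k = 1` raises `T` by one until the ceiling is reached, the walk is below the ceiling
only while fewer than `c` of the previous `η_j` equal `1`. Hence `L_n^{(i)}` differs from
`#{k ≤ n | θ_k > 0}` by at most the number of such times. By the strong law the number of ones
among the `η_j` grows linearly, at rate `μ_i({η = 1}) > 0`, so there are `O(1 + c_n) = o(n)` such
times, and the strong law for the indicators of `θ_k > 0` gives the limit `p_θ`.
-/

open MeasureTheory ProbabilityTheory Filter Finset Asymptotics Topology

noncomputable section

namespace ABTest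

variable {Ω : Type*}

/-- The Bernoulli law on `ℕ` with success probability `r`. -/
def bern (r : ℝ) : Measure ℕ :=
  ENNReal.ofReal r • Measure.dirac 1 + ENNReal.ofReal (1 - r) • Measure.dirac 0

/-- The joint law of `(I_k, (ξ_k, η_k))`: given `I_k = i`, the pair `(ξ_k, η_k)` has law `μ_i`. -/
def mixLaw (p : ℝ) (μ0 μ1 : Measure (ℕ × ℕ)) : Measure (ℕ × ℕ × ℕ) :=
  ENNReal.ofReal p • (Measure.dirac 1).prod μ1 +
    ENNReal.ofReal (1 - p) • (Measure.dirac 0).prod μ0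

/-- The 2-dimensional random walk `R_k = (S_k, T_k)` in the semi-infinite strip of height `c`.
Step `k` (from `R_{k-1}` to `R_k`) uses the random variables with index `k`. -/
def walk (ξ η θ J : ℕ → Ω → ℕ) (c : ℕ) : ℕ → Ω → ℕ × ℕ
  | 0, _ => (0, 0)
  | k + 1, ω =>
    let R := walk ξ η θ J c k ω
    if R.2 = c then (R.1 + θ (k + 1) ω, R.2)
    else if R.2 + η (k + 1) ω ≤ c then (R.1 + ξ (k + 1) ω, R.2 + η (k + 1) ω)
    else if J (k + 1) ω = 1 then (R.1 + ξ (k + 1) ω, c)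
    else R

/-- `N_n^{(i)}`, the number of visitors in group `i` among the first `n` visitors. -/
def Ni (I : ℕ → Ω → ℕ) (i n : ℕ) (ω : Ω) : ℕ :=
  ∑ k ∈ Finset.Icc 1 n, if I k ω = i then 1 else 0

/-- `L_n^{(i)}`, the number of purchases (`X_k + Y_k > 0`) in group `i` among the first `n`
visitors, when the capacity of the popular good is `c`. -/
def Li (I J ξ η θ : ℕ → Ω → ℕ) (c i n : ℕ) (ω : Ω) : ℕ :=
  ∑ k ∈ Finset.Icc 1 n,
    if (walk ξ η θ J c (k - 1) ω).1 + (walk ξ η θ J c (k - 1) ω).2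
        < (walk ξ η θ J c k ω).1 + (walk ξ η θ J c k ω).2 ∧ I k ω = i
    then 1 else 0

/-- The chi-squared statistic associated with the contingency table of the first `n` visitors. -/
def chiSq (I J ξ η θ : ℕ → Ω → ℕ) (c n : ℕ) (ω : Ω) : ℝ :=
  let N0 : ℝ := (Ni I 0 n ω : ℝ)
  let N1 : ℝ := (Ni I 1 n ω : ℝ)
  let L0 : ℝ := (Li I J ξ η θ c 0 n ω : ℝ)
  let L1 : ℝ := (Li I J ξ η θ c 1 n ω : ℝ)
  let L : ℝ := L0 + L1
  ((L0 - L * N0 / (n : ℝ)) ^ 2 / (L * N0 / (n : ℝ)) +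
      (L1 - L * N1 / (n : ℝ)) ^ 2 / (L * N1 / (n : ℝ))) +
    ((N0 - L0 - ((n : ℝ) - L) * N0 / (n : ℝ)) ^ 2 / (((n : ℝ) - L) * N0 / (n : ℝ)) +
      (N1 - L1 - ((n : ℝ) - L) * N1 / (n : ℝ)) ^ 2 / (((n : ℝ) - L) * N1 / (n : ℝ)))

/-- `p_i = μ_i({(0,0)}ᶜ)`, the theoretical conversion rate of law `μ`. -/
def pSale (μ : Measure (ℕ × ℕ)) : ℝ := 1 - (μ {(0, 0)}).toReal

/-- `m^ξ`, the mean of the first coordinate under `μ`. -/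
def mXi (μ : Measure (ℕ × ℕ)) : ℝ := ∫ x, (x.1 : ℝ) ∂μ

/-- `m^η`, the mean of the second coordinate under `μ`. -/
def mEta (μ : Measure (ℕ × ℕ)) : ℝ := ∫ x, (x.2 : ℝ) ∂μ

/-- `p_θ = ν({m : 0 < m})`, the conversion rate after sell-out. -/
def pTheta (ν : Measure ℕ) : ℝ := (ν {m | 0 < m}).toReal

/-- `m^η = p m_1^η + (1-p) m_0^η`. -/
def mEtaBar (p : ℝ) (μ0 μ1 : Measure (ℕ × ℕ)) : ℝ := p * mEta μ1 + (1 - p) * mEta μ0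

/-- Model assumptions (A1)–(A5): the sequence `((I_k, ξ_k, η_k), J_k, θ_k)_{k ≥ 0}` is i.i.d.;
within one index, `(I_k, (ξ_k, η_k))`, `J_k` and `θ_k` are independent with respective laws
`mixLaw p μ0 μ1` (i.e. `I_k` is Bernoulli(`p`) and conditionally on `I_k = i` the vector
`(ξ_k, η_k)` has law `μ_i`), Bernoulli(`q`) and `ν`; the laws `μ_0, μ_1` charge every point of
`{0,1}²`, and all variables have finite second moments. -/
structure IsModel {Ω : Type*} [MeasurableSpace Ω] (P : Measure Ω) (p q : ℝ)
    (I J ξ η θ : ℕ → Ω → ℕ) (μ0 μ1 : Measure (ℕ × ℕ)) (ν : Measure ℕ) : Prop where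
  isProb : IsProbabilityMeasure P
  probμ0 : IsProbabilityMeasure μ0
  probμ1 : IsProbabilityMeasure μ1
  probν : IsProbabilityMeasure ν
  hp : 0 ≤ p ∧ p ≤ 1
  hq : 0 ≤ q ∧ q ≤ 1
  meas : ∀ k, Measurable fun ω => ((I k ω, ξ k ω, η k ω), J k ω, θ k ω)
  iid : iIndepFun
    (fun k ω => ((I k ω, ξ k ω, η k ω), J k ω, θ k ω)) P
  law : ∀ k, Measure.map (fun ω => ((I k ω, ξ k ω, η k ω), J k ω, θ k ω)) P
      = (mixLaw p μ0 μ1).prod ((bern q).prod ν)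
  pos0 : ∀ a b : ℕ, a ≤ 1 → b ≤ 1 → 0 < μ0 {(a, b)}
  pos1 : ∀ a b : ℕ, a ≤ 1 → b ≤ 1 → 0 < μ1 {(a, b)}
  mom0 : Integrable (fun x : ℕ × ℕ => (x.1 : ℝ) ^ 2 + (x.2 : ℝ) ^ 2) μ0
  mom1 : Integrable (fun x : ℕ × ℕ => (x.1 : ℝ) ^ 2 + (x.2 : ℝ) ^ 2) μ1
  momν : Integrable (fun m : ℕ => (m : ℝ) ^ 2) ν

/-- `C_n^{(i)} = L_n^{(i)} / N_n^{(i)}`, the empirical conversion rate of group `i`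
(set to `0` on the event `{N_n^{(i)} = 0}`). -/
def Cni (I J ξ η θ : ℕ → Ω → ℕ) (c i n : ℕ) (ω : Ω) : ℝ :=
  if Ni I i n ω = 0 then 0 else (Li I J ξ η θ c i n ω : ℝ) / (Ni I i n ω : ℝ)

lemma card_filter_Icc_one_eq_card_filter_range (p : ℕ → Prop) [DecidablePred p] (n : ℕ) :
    #{k ∈ Icc 1 n | p k} = #{k ∈ range n | p (k + 1)} := by
  refine (card_nbij' (· + 1) (· - 1) ?_ ?_ ?_ ?_).symm <;> intro k hk <;>
    simp only [coe_filter, Set.mem_ofPred_eq, mem_range, mem_Icc] at hk ⊢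
  · exact ⟨by omega, hk.2⟩
  · exact ⟨by omega, by rw [Nat.sub_add_cancel hk.1.1]; exact hk.2⟩
  · omega
  · omega

lemma abs_card_filter_sub_card_filter_le {α : Type*} {s : Finset α} {p q r : α → Prop}
    [DecidablePred p] [DecidablePred q] [DecidablePred r]
    (h : ∀ x ∈ s, ¬ r x → (p x ↔ q x)) :
    |(#{x ∈ s | p x} : ℝ) - #{x ∈ s | q x}| ≤ #{x ∈ s | r x} := by
  have key : ∀ {p q : α → Prop} [DecidablePred p] [DecidablePred q],
      (∀ x ∈ s, ¬ r x → p x → q x) → #{x ∈ s | p x} ≤ #{x ∈ s | q x} + #{x ∈ s | r x} := by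
    intro p q _ _ hpq
    classical
    refine (card_le_card fun x hx => ?_).trans (card_union_le _ _)
    simp only [mem_filter, mem_union] at hx ⊢
    by_cases hr : r x
    · exact Or.inr ⟨hx.1, hr⟩
    · exact Or.inl ⟨hx.1, hpq x hx.1 hr hx.2⟩
  have h₁ : (#{x ∈ s | p x} : ℝ) ≤ #{x ∈ s | q x} + #{x ∈ s | r x} := by
    exact_mod_cast key fun x hx hr => (h x hx hr).1
  have h₂ : (#{x ∈ s | q x} : ℝ) ≤ #{x ∈ s | p x} + #{x ∈ s | r x} := by
    exact_mod_cast key fun x hx hr => (h x hx hr).2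
  exact abs_sub_le_iff.2 ⟨by linarith, by linarith⟩

section Walk

variable (ξ η θ J : ℕ → Ω → ℕ) (c : ℕ) (ω : Ω)

lemma walk_snd_le (k : ℕ) : (walk ξ η θ J c k ω).2 ≤ c := by
  induction k with
  | zero => exact Nat.zero_le c
  | succ k ih => simp only [walk]; split_ifs <;> omega

lemma min_card_le_walk_snd (k : ℕ) :
    min c #{j ∈ Icc 1 k | η j ω = 1} ≤ (walk ξ η θ J c k ω).2 := by
  induction k with
  | zero => simp [walk]
  | succ k ih =>
    have hT := walk_snd_le ξ η θ J c ω k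
    rw [card_filter_Icc_one_eq_card_filter_range] at ih ⊢
    rw [card_filter, sum_range_succ, ← card_filter]
    simp only [walk]
    split_ifs <;> omega

lemma walk_sum_lt_succ_iff_of_snd_eq (k : ℕ) (h : (walk ξ η θ J c k ω).2 = c) :
    (walk ξ η θ J c k ω).1 + (walk ξ η θ J c k ω).2
        < (walk ξ η θ J c (k + 1) ω).1 + (walk ξ η θ J c (k + 1) ω).2 ↔ 0 < θ (k + 1) ω := by
  simp only [walk, if_pos h]
  omega

end Walk

lemma abs_Li_sub_card_pos_le (I J ξ η θ : ℕ → Ω → ℕ) (c i n : ℕ) (ω : Ω)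
    (hI : ∀ k, I k ω = i) :
    |(Li I J ξ η θ c i n ω : ℝ) - #{k ∈ Icc 1 n | 0 < θ k ω}|
      ≤ #{k ∈ range n | #{j ∈ Icc 1 k | η j ω = 1} < c} := by
  have hLi : Li I J ξ η θ c i n ω = #{k ∈ Icc 1 n | (walk ξ η θ J c (k - 1) ω).1
      + (walk ξ η θ J c (k - 1) ω).2 < (walk ξ η θ J c k ω).1 + (walk ξ η θ J c k ω).2} := by
    simp only [Li, hI, and_true, card_filter]
  have hshift := card_filter_Icc_one_eq_card_filter_range
    (fun k => #{j ∈ Icc 1 (k - 1) | η j ω = 1} < c) n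
  simp only [Nat.add_sub_cancel] at hshift
  rw [hLi, ← hshift]
  refine abs_card_filter_sub_card_filter_le fun k hk hA => ?_
  obtain ⟨m, rfl⟩ : ∃ m, k = m + 1 := ⟨k - 1, (Nat.sub_add_cancel (mem_Icc.1 hk).1).symm⟩
  have hT : (walk ξ η θ J c m ω).2 = c := by
    have := min_card_le_walk_snd ξ η θ J c ω m
    have := walk_snd_le ξ η θ J c ω m
    simp only [Nat.add_sub_cancel] at hA
    omega
  simpa only [Nat.add_sub_cancel] using walk_sum_lt_succ_iff_of_snd_eq ξ η θ J c ω m hT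

lemma tendsto_card_filter_lt_div_atTop_zero {a b : ℕ → ℕ} {r : ℝ} (hr : 0 < r)
    (ha : Tendsto (fun n => (a n : ℝ) / n) atTop (𝓝 r))
    (hb : Tendsto (fun n => (b n : ℝ) / n) atTop (𝓝 0)) :
    Tendsto (fun n => (#{k ∈ range n | a k < b n} : ℝ) / n) atTop (𝓝 0) := by
  obtain ⟨K, hK⟩ : ∃ K, ∀ k ≥ K, r / 2 * k ≤ a k := by
    refine eventually_atTop.1 ?_
    filter_upwards [ha.eventually (eventually_gt_nhds (half_lt_self hr)), eventually_gt_atTop 0]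
      with k hk hk0
    exact ((lt_div_iff₀ (by exact_mod_cast hk0)).1 hk).le
  have hcard : ∀ n, (#{k ∈ range n | a k < b n} : ℝ) ≤ K + 1 + 2 / r * b n := by
    intro n
    have hsub : {k ∈ range n | a k < b n} ⊆ range K ∪ range ⌈2 / r * b n⌉₊ := by
      intro k hk
      simp only [mem_filter, mem_range, mem_union] at hk ⊢
      by_cases hkK : k < K
      · exact Or.inl hkK
      · right
        have : r / 2 * k < b n := (hK k (not_lt.1 hkK)).trans_lt (by exact_mod_cast hk.2)
        rw [Nat.lt_ceil, div_mul_eq_mul_div, lt_div_iff₀ hr]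
        linarith
    have hunion := (card_le_card hsub).trans (card_union_le _ _)
    rw [card_range, card_range] at hunion
    have hceil := Nat.ceil_lt_add_one (by positivity : 0 ≤ 2 / r * b n)
    have : (#{k ∈ range n | a k < b n} : ℝ) ≤ K + ⌈2 / r * b n⌉₊ := by exact_mod_cast hunion
    linarith
  refine squeeze_zero (fun n => by positivity) (fun n => div_le_div_of_nonneg_right (hcard n)
    n.cast_nonneg) ?_
  simpa [add_div, mul_div_assoc] using
    (tendsto_const_div_atTop_nhds_zero_nat ((K : ℝ) + 1)).add (hb.const_mul (2 / r))

lemma strong_law_ae_card_filter {α : Type*} [MeasurableSpace α] [MeasurableSpace Ω]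
    {P : Measure Ω} [IsFiniteMeasure P] {X : ℕ → Ω → α} (hX : ∀ k, Measurable (X k))
    (hind : iIndepFun X P) {μ : Measure α} (hlaw : ∀ k, P.map (X k) = μ)
    {p : α → Prop} [DecidablePred p] (hp : MeasurableSet {x | p x}) :
    ∀ᵐ ω ∂P, Tendsto (fun n : ℕ => (#{k ∈ Icc 1 n | p (X k ω)} : ℝ) / n) atTop
      (𝓝 (μ.real {x | p x})) := by
  have hg : Measurable ({x | p x}.indicator (1 : α → ℝ)) := measurable_one.indicator hp
  let Y : ℕ → Ω → ℝ := fun k => {x | p x}.indicator 1 ∘ X (k + 1)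
  have hident : ∀ k, IdentDistrib (Y k) (Y 0) P P := fun k =>
    IdentDistrib.comp ⟨(hX _).aemeasurable, (hX _).aemeasurable, by rw [hlaw, hlaw]⟩ hg
  have hindep : Pairwise fun k l => Y k ⟂ᵢ[P] Y l := fun k l hkl =>
    (hind.indepFun (by omega : k + 1 ≠ l + 1)).comp hg hg
  have hY0 : Y 0 = (X 1 ⁻¹' {x | p x}).indicator 1 := rfl
  have hint : Integrable (Y 0) P := by
    rw [hY0]
    exact (integrable_const 1).indicator (hX 1 hp)
  have hmean : P[Y 0] = μ.real {x | p x} := by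
    rw [hY0, integral_indicator_one (hX 1 hp), measureReal_def, measureReal_def,
      ← Measure.map_apply (hX 1) hp, hlaw]
  filter_upwards [strong_law_ae_real Y hint hindep hident] with ω hω
  rw [← hmean]
  refine hω.congr fun n => ?_
  rw [card_filter_Icc_one_eq_card_filter_range, card_filter]
  push_cast
  simp only [Y, Function.comp_apply, Set.indicator_apply, Set.mem_ofPred_eq, Pi.one_apply]

lemma tendsto_Cni_of_forall_I_eq (I J ξ η θ : ℕ → Ω → ℕ) (c : ℕ → ℕ) (i : ℕ) (ω : Ω)
    {l r : ℝ} (hI : ∀ k, I k ω = i) (hr : 0 < r)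
    (hθ : Tendsto (fun n : ℕ => (#{k ∈ Icc 1 n | 0 < θ k ω} : ℝ) / n) atTop (𝓝 l))
    (hη : Tendsto (fun n : ℕ => (#{k ∈ Icc 1 n | η k ω = 1} : ℝ) / n) atTop (𝓝 r))
    (hc : Tendsto (fun n : ℕ => (c n : ℝ) / n) atTop (𝓝 0)) :
    Tendsto (fun n : ℕ => Cni I J ξ η θ (c n) i n ω) atTop (𝓝 l) := by
  have hdiff : Tendsto (fun n : ℕ =>
      ((Li I J ξ η θ (c n) i n ω : ℝ) - #{k ∈ Icc 1 n | 0 < θ k ω}) / n) atTop (𝓝 0) := by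
    refine squeeze_zero_norm (fun n => ?_) (tendsto_card_filter_lt_div_atTop_zero hr hη hc)
    rw [norm_div, Real.norm_eq_abs, Real.norm_natCast]
    exact div_le_div_of_nonneg_right (abs_Li_sub_card_pos_le I J ξ η θ (c n) i n ω hI)
      n.cast_nonneg
  have hNi : ∀ n, Ni I i n ω = n := fun n => by simp [Ni, hI]
  have hsum := hθ.add hdiff
  rw [add_zero] at hsum
  refine hsum.congr' ?_
  filter_upwards [eventually_ge_atTop 1] with n hn
  rw [Cni, hNi, if_neg (by omega), ← add_div, add_sub_cancel]

theorem ae_tendsto_Cni_of_law_eq_dirac_prod [MeasurableSpace Ω] {P : Measure Ω}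
    [IsProbabilityMeasure P] {I J ξ η θ : ℕ → Ω → ℕ} {μ : Measure (ℕ × ℕ)}
    [IsProbabilityMeasure μ] {ρ ν : Measure ℕ} [IsProbabilityMeasure ρ] [IsProbabilityMeasure ν]
    {i : ℕ} (hmeas : ∀ k, Measurable fun ω => ((I k ω, ξ k ω, η k ω), J k ω, θ k ω))
    (hiid : iIndepFun (fun k ω => ((I k ω, ξ k ω, η k ω), J k ω, θ k ω)) P)
    (hlaw : ∀ k, P.map (fun ω => ((I k ω, ξ k ω, η k ω), J k ω, θ k ω))
      = ((Measure.dirac i).prod μ).prod (ρ.prod ν))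
    (hη : 0 < μ {x | x.2 = 1}) {c : ℕ → ℕ}
    (hc : Tendsto (fun n : ℕ => (c n : ℝ) / n) atTop (𝓝 0)) :
    ∀ᵐ ω ∂P, Tendsto (fun n : ℕ => Cni I J ξ η θ (c n) i n ω) atTop (𝓝 (pTheta ν)) := by
  set L := ((Measure.dirac i).prod μ).prod (ρ.prod ν)
  have hIset : L {x | x.1.1 ≠ i} = 0 := by
    rw [show {x : (ℕ × ℕ × ℕ) × ℕ × ℕ | x.1.1 ≠ i} = (({i}ᶜ : Set ℕ) ×ˢ Set.univ) ×ˢ Set.univ by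
      ext; simp]
    simp [L, Measure.prod_prod]
  have hθset : L.real {x | 0 < x.2.2} = pTheta ν := by
    rw [show {x : (ℕ × ℕ × ℕ) × ℕ × ℕ | 0 < x.2.2} = Set.univ ×ˢ (Set.univ ×ˢ {m | 0 < m}) by
      ext; simp]
    simp [L, measureReal_def, Measure.prod_prod, pTheta]
  have hηset : L.real {x | x.1.2.2 = 1} = μ.real {x | x.2 = 1} := by
    rw [show {x : (ℕ × ℕ × ℕ) × ℕ × ℕ | x.1.2.2 = 1} = (Set.univ ×ˢ {x | x.2 = 1}) ×ˢ Set.univ by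
      ext; simp]
    simp [L, measureReal_def, Measure.prod_prod]
  have hI : ∀ᵐ ω ∂P, ∀ k, I k ω = i := by
    refine ae_all_iff.2 fun k => ae_iff.2 ?_
    rw [← hIset, ← hlaw k, Measure.map_apply (hmeas k) MeasurableSet.of_discrete]
    rfl
  have hθ := strong_law_ae_card_filter hmeas hiid hlaw (p := fun x => 0 < x.2.2)
    MeasurableSet.of_discrete
  have hηlim := strong_law_ae_card_filter hmeas hiid hlaw (p := fun x => x.1.2.2 = 1)
    MeasurableSet.of_discrete
  rw [hθset] at hθ
  rw [hηset] at hηlim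
  filter_upwards [hI, hθ, hηlim] with ω hIω hθω hηω
  exact tendsto_Cni_of_forall_I_eq I J ξ η θ c i ω hIω
    (ENNReal.toReal_pos hη.ne' (measure_ne_top μ _)) hθω hηω hc

lemma isProbabilityMeasure_bern {q : ℝ} (h0 : 0 ≤ q) (h1 : q ≤ 1) :
    IsProbabilityMeasure (bern q) := by
  constructor
  simp only [bern, Measure.coe_add, Pi.add_apply, Measure.smul_apply, smul_eq_mul, measure_univ,
    mul_one, ← ENNReal.ofReal_add h0 (sub_nonneg.2 h1), add_sub_cancel, ENNReal.ofReal_one]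

theorem conversion_rate_as_limit_pure_versions_general
    {Ω : Type*} [MeasurableSpace Ω] (P : Measure Ω) (p q : ℝ)
    (I J ξ η θ : ℕ → Ω → ℕ) (μ0 μ1 : Measure (ℕ × ℕ)) (ν : Measure ℕ)
    (hM : IsModel P p q I J ξ η θ μ0 μ1 ν)
    (c : ℕ → ℕ)
    (hc0 : Tendsto (fun n : ℕ => (c n : ℝ) / (n : ℝ)) atTop (𝓝 0)) :
    (p = 0 → ∀ᵐ ω ∂P,
        Tendsto (fun n : ℕ => Cni I J ξ η θ (c n) 0 n ω) atTop (𝓝 (pTheta ν))) ∧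
    (p = 1 → ∀ᵐ ω ∂P,
        Tendsto (fun n : ℕ => Cni I J ξ η θ (c n) 1 n ω) atTop (𝓝 (pTheta ν))) := by
  have := hM.isProb
  have := hM.probμ0
  have := hM.probμ1
  have := hM.probν
  have := isProbabilityMeasure_bern hM.hq.1 hM.hq.2
  have hη : ∀ μ : Measure (ℕ × ℕ), 0 < μ {(0, 1)} → 0 < μ {x | x.2 = 1} := fun μ h =>
    h.trans_le (measure_mono (by simp))
  constructor
  · rintro rfl
    refine ae_tendsto_Cni_of_law_eq_dirac_prod (ρ := bern q) hM.meas hM.iid (fun k => ?_)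
      (hη μ0 (hM.pos0 0 1 zero_le_one le_rfl)) hc0
    simp [hM.law k, mixLaw]
  · rintro rfl
    refine ae_tendsto_Cni_of_law_eq_dirac_prod (ρ := bern q) hM.meas hM.iid (fun k => ?_)
      (hη μ1 (hM.pos1 0 1 zero_le_one le_rfl)) hc0
    simp [hM.law k, mixLaw]

/-- **Theorem 2 (strong law for the conversion rates of each version used alone).**
Under the model assumptions (A1)–(A5) (with the degenerate choices `p = 0` resp. `p = 1` of the
Bernoulli parameter of the `I_k`, i.e. under `P_0` resp. `P_1`), if `c_n / n → 0`, then the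
empirical conversion rate `C_n^{(0)}` converges almost surely to `p_θ` under `P_0`, and
`C_n^{(1)}` converges almost surely to `p_θ` under `P_1`. -/
theorem conversion_rate_as_limit_pure_versions
    {Ω : Type*} [MeasurableSpace Ω] (P : Measure Ω) (p q : ℝ)
    (I J ξ η θ : ℕ → Ω → ℕ) (μ0 μ1 : Measure (ℕ × ℕ)) (ν : Measure ℕ)
    (hM : IsModel P p q I J ξ η θ μ0 μ1 ν)
    (c : ℕ → ℕ) (hcpos : ∀ n, 0 < c n) (hmono : Monotone c)
    (hunbdd : Tendsto c atTop atTop)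
    (hc0 : Tendsto (fun n : ℕ => (c n : ℝ) / (n : ℝ)) atTop (𝓝 0)) :
    (p = 0 → ∀ᵐ ω ∂P,
        Tendsto (fun n : ℕ => Cni I J ξ η θ (c n) 0 n ω) atTop (𝓝 (pTheta ν))) ∧
    (p = 1 → ∀ᵐ ω ∂P,
        Tendsto (fun n : ℕ => Cni I J ξ η θ (c n) 1 n ω) atTop (𝓝 (pTheta ν))) :=
  conversion_rate_as_limit_pure_versions_general P p q I J ξ η θ μ0 μ1 ν hM c hc0

end ABTest
end
end

section
/- Let (η_k)_{k≥1} be i.i.d. nonnegative random variables with mean m^η = E[η_1] ∈ (0,∞), let (J_k)_{k≥1} be i.i.d. Bernoulli(q) with q ∈ (0,1], independent of (η_k), and set S̃_0 = 0, S̃_m = Σ_{k=1}^m η_k 1{J_k=1}. Let (c_n)_{n≥1} be a nondecreasing unbounded sequence of positive integers. Then for every a > 0, every ε > 0 and every δ ∈ (0, ε q m^η), P( min_{m=0,…,⌊a c_n⌋} (S̃_{m+⌊ε √(c_n)⌋} − S̃_m) ≥ δ √(c_n) ) → 1 as n → ∞. -/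
/-! The steps `X_k = η_k 1{J_k = 1}` of the thinned walk are i.i.d. and nonnegative with mean
`q m^η > θ := δ / ε`. For a nonnegative integrable `X`, dominated convergence gives
`(E[e^{-sX}] - 1) / s → -E[X]` as `s ↓ 0`, so some `t < 0` makes `ρ := e^{-θt} E[e^{tX}] < 1`.
Chernoff's bound then controls the probability that one window of `L = ⌊ε √c⌋` steps has sum at
most `δ √c ≤ θ (L + 1)` by `e^{-θt} ρ^L`, and a union bound over the `⌊a c⌋ + 1 = O(L²)` windows
leaves `O(L² ρ^L) → 0`. -/
open MeasureTheory ProbabilityTheory Filter Finset Topology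

noncomputable section

namespace ABTest

variable {Ω : Type*}

/-- `S̃_m = Σ_{k=1}^m η_k 1{J_k = 1}`. -/
def Stilde (η : ℕ → Ω → ℝ) (J : ℕ → Ω → ℕ) (m : ℕ) (ω : Ω) : ℝ :=
  ∑ k ∈ Finset.Icc 1 m, η k ω * (if J k ω = 1 then 1 else 0)

open Real

section

variable [MeasurableSpace Ω] {P : Measure Ω}

lemma integrable_exp_mul_of_nonpos {X : Ω → ℝ} [IsFiniteMeasure P] (hX : AEMeasurable X P)
    (hX0 : 0 ≤ᵐ[P] X) {t : ℝ} (ht : t ≤ 0) : Integrable (fun ω => exp (t * X ω)) P := by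
  refine Integrable.mono' (integrable_const 1) (by fun_prop) ?_
  filter_upwards [hX0] with ω hω
  rw [norm_of_nonneg (exp_pos _).le, exp_le_one_iff]
  exact mul_nonpos_of_nonpos_of_nonneg ht hω

lemma abs_inv_mul_exp_neg_mul_sub_one_le {s x : ℝ} (hs : 0 < s) (hx : 0 ≤ x) :
    |s⁻¹ * (exp (-s * x) - 1)| ≤ x := by
  have h1 : exp (-s * x) ≤ 1 := exp_le_one_iff.2 (by nlinarith)
  have h2 : 1 - s * x ≤ exp (-s * x) := by linarith [add_one_le_exp (-s * x)]
  rw [abs_of_nonpos (mul_nonpos_of_nonneg_of_nonpos (inv_nonneg.2 hs.le) (by linarith)),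
    neg_mul_eq_mul_neg, inv_mul_le_iff₀ hs]
  linarith

lemma tendsto_inv_mul_mgf_neg_sub_one [IsProbabilityMeasure P] {X : Ω → ℝ}
    (hX0 : 0 ≤ᵐ[P] X) (hX : Integrable X P) :
    Tendsto (fun s => s⁻¹ * (mgf X P (-s) - 1)) (𝓝[>] 0) (𝓝 (-P[X])) := by
  have hlim : Tendsto (fun s => ∫ ω, s⁻¹ * (exp (-s * X ω) - 1) ∂P) (𝓝[>] 0)
      (𝓝 (∫ ω, -X ω ∂P)) := by
    refine tendsto_integral_filter_of_dominated_convergence X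
      (Eventually.of_forall fun s => by fun_prop) ?_ hX ?_
    · filter_upwards [self_mem_nhdsWithin] with s hs
      filter_upwards [hX0] with ω hω
      exact abs_inv_mul_exp_neg_mul_sub_one_le hs hω
    · refine Eventually.of_forall fun ω => ?_
      have hderiv : HasDerivAt (fun s => exp (-s * X ω)) (-X ω) 0 := by
        simpa using ((hasDerivAt_id (0 : ℝ)).neg.mul_const (X ω)).exp
      simpa using hderiv.tendsto_slope_zero_right
  rw [integral_neg] at hlim
  refine hlim.congr' ?_
  filter_upwards [self_mem_nhdsWithin] with s (hs : 0 < s)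
  rw [integral_const_mul, integral_sub (integrable_exp_mul_of_nonpos hX.aemeasurable hX0
    (by linarith)) (integrable_const 1)]
  simp [mgf]

lemma exists_neg_mgf_lt_exp_mul [IsProbabilityMeasure P] {X : Ω → ℝ}
    (hX0 : 0 ≤ᵐ[P] X) (hX : Integrable X P) {θ : ℝ} (hθ : θ < P[X]) :
    ∃ t < 0, mgf X P t < exp (θ * t) := by
  obtain ⟨s, hs, hs0 : 0 < s⟩ := (((tendsto_inv_mul_mgf_neg_sub_one hX0 hX).eventually
    (eventually_lt_nhds (neg_lt_neg hθ))).and self_mem_nhdsWithin).exists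
  refine ⟨-s, neg_lt_zero.2 hs0, ?_⟩
  rw [inv_mul_lt_iff₀ hs0] at hs
  calc mgf X P (-s) < θ * -s + 1 := by linarith
    _ ≤ exp (θ * -s) := add_one_le_exp _

lemma measureReal_sum_le_le_exp_mul_mgf_pow [IsFiniteMeasure P] {ι : Type*} {X : ι → Ω → ℝ}
    {i₀ : ι} (hmeas : ∀ i, Measurable (X i)) (hindep : iIndepFun X P)
    (hident : ∀ i, IdentDistrib (X i) (X i₀) P P) {t : ℝ} (ht : t ≤ 0)
    (hexp : Integrable (fun ω => exp (t * X i₀ ω)) P) (s : Finset ι) (u : ℝ) :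
    P.real {ω | ∑ i ∈ s, X i ω ≤ u} ≤ exp (-t * u) * mgf (X i₀) P t ^ #s := by
  have hmgf : mgf (∑ i ∈ s, X i) P t = mgf (X i₀) P t ^ #s := by
    rw [hindep.mgf_sum hmeas]
    exact prod_eq_pow_card fun i _ => mgf_congr_of_identDistrib _ _ (hident i) t
  have hint : Integrable (fun ω => exp (t * (∑ i ∈ s, X i) ω)) P :=
    hindep.integrable_exp_mul_sum hmeas fun i _ =>
      ((hident i).comp (measurable_const_mul t).exp).integrable_iff.2 hexp
  simpa [hmgf] using measure_le_le_exp_mul_mgf u ht hint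

lemma tendsto_floor_add_one_mul_pow_floor_sqrt {ι : Type*} {l : Filter ι} {x : ι → ℝ}
    (hx : Tendsto x l atTop) {a ε ρ : ℝ} (ha : 0 ≤ a) (hε : 0 < ε) (hρ0 : 0 < ρ) (hρ1 : ρ < 1) :
    Tendsto (fun i => ((⌊a * x i⌋₊ : ℝ) + 1) * ρ ^ ⌊ε * √(x i)⌋₊) l (𝓝 0) := by
  set L := fun i => ⌊ε * √(x i)⌋₊
  have hL : Tendsto L l atTop :=
    tendsto_nat_floor_atTop.comp ((tendsto_sqrt_atTop.comp hx).const_mul_atTop hε)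
  have hpoly : Tendsto (fun k : ℕ => ((k : ℝ) + 1) ^ 2 * ρ ^ k) atTop (𝓝 0) := by
    have := ((tendsto_pow_const_mul_const_pow_of_abs_lt_one 2
      (abs_lt.2 ⟨by linarith, hρ1⟩)).comp (tendsto_add_atTop_nat 1)).const_mul ρ⁻¹
    rw [mul_zero] at this
    refine this.congr fun k => ?_
    simp only [Function.comp_apply, Nat.cast_add, Nat.cast_one, pow_succ]
    field_simp
  have hbound : ∀ᶠ i in l, ((⌊a * x i⌋₊ : ℝ) + 1) * ρ ^ L i
      ≤ (a / ε ^ 2 + 1) * (((L i : ℝ) + 1) ^ 2 * ρ ^ L i) := by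
    filter_upwards [hx.eventually_ge_atTop 0] with i hi
    have hsq : ε ^ 2 * x i ≤ ((L i : ℝ) + 1) ^ 2 := by
      calc ε ^ 2 * x i = (ε * √(x i)) ^ 2 := by rw [mul_pow, sq_sqrt hi]
        _ ≤ ((L i : ℝ) + 1) ^ 2 :=
          pow_le_pow_left₀ (by positivity) (Nat.lt_floor_add_one _).le 2
    have hfloor : (⌊a * x i⌋₊ : ℝ) ≤ a / ε ^ 2 * ((L i : ℝ) + 1) ^ 2 := by
      calc (⌊a * x i⌋₊ : ℝ) ≤ a * x i := Nat.floor_le (by positivity)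
        _ = a / ε ^ 2 * (ε ^ 2 * x i) := by field_simp
        _ ≤ a / ε ^ 2 * ((L i : ℝ) + 1) ^ 2 := by gcongr
    have hone : (1 : ℝ) ≤ ((L i : ℝ) + 1) ^ 2 :=
      one_le_pow₀ (by linarith [(L i).cast_nonneg (α := ℝ)])
    rw [← mul_assoc]
    gcongr
    linarith
  refine tendsto_of_tendsto_of_tendsto_of_le_of_le' tendsto_const_nhds
    (by simpa using (hpoly.comp hL).const_mul (a / ε ^ 2 + 1))
    (Eventually.of_forall fun i => by positivity) hbound

lemma tendsto_measure_of_tendsto_measureReal_compl [IsProbabilityMeasure P] {ι : Type*}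
    {l : Filter ι} {s : ι → Set Ω} (h : Tendsto (fun i => P.real (s i)ᶜ) l (𝓝 0)) :
    Tendsto (fun i => P (s i)) l (𝓝 1) := by
  have hcompl : Tendsto (fun i => P (s i)ᶜ) l (𝓝 0) := by
    simpa [ofReal_measureReal] using ENNReal.tendsto_ofReal h
  have hsub : Tendsto (fun i => 1 - P (s i)ᶜ) l (𝓝 1) := by
    simpa using ENNReal.Tendsto.sub tendsto_const_nhds hcompl (Or.inl ENNReal.one_ne_top)
  refine tendsto_of_tendsto_of_tendsto_of_le_of_le hsub tendsto_const_nhds (fun i => ?_)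
    (fun i => prob_le_one)
  rw [tsub_le_iff_right, ← measure_univ (μ := P)]
  exact measure_univ_le_add_compl _

theorem tendsto_measure_forall_le_sum_Ioc [IsProbabilityMeasure P] {X : ℕ → Ω → ℝ}
    (hmeas : ∀ k, Measurable (X k)) (hnonneg : 0 ≤ᵐ[P] X 0) (hindep : iIndepFun X P)
    (hident : ∀ k, IdentDistrib (X k) (X 0) P P) (hint : Integrable (X 0) P)
    {ι : Type*} {l : Filter ι} {x : ι → ℝ} (hx : Tendsto x l atTop)
    {a ε δ : ℝ} (ha : 0 ≤ a) (hε : 0 < ε) (hδ : 0 ≤ δ) (hδμ : δ < ε * P[X 0]) :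
    Tendsto (fun i => P {ω | ∀ m ≤ ⌊a * x i⌋₊,
      δ * √(x i) ≤ ∑ k ∈ Ioc m (m + ⌊ε * √(x i)⌋₊), X k ω}) l (𝓝 1) := by
  set θ := δ / ε
  have hθμ : θ < P[X 0] := (div_lt_iff₀' hε).2 hδμ
  obtain ⟨t, ht, hmgf⟩ := exists_neg_mgf_lt_exp_mul hnonneg hint hθμ
  have hexp := integrable_exp_mul_of_nonpos (hmeas 0).aemeasurable hnonneg ht.le
  set C := exp (-θ * t)
  set ρ := C * mgf (X 0) P t
  have hρ0 : 0 < ρ := mul_pos (exp_pos _) (mgf_pos hexp)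
  have hρ1 : ρ < 1 := by
    calc ρ < C * exp (θ * t) := mul_lt_mul_of_pos_left hmgf (exp_pos _)
      _ = 1 := by rw [← exp_add]; simp
  set L := fun i => ⌊ε * √(x i)⌋₊
  have hwindow : ∀ i m, P.real {ω | ∑ k ∈ Ioc m (m + L i), X k ω ≤ δ * √(x i)}
      ≤ C * ρ ^ L i := by
    intro i m
    have hu : δ * √(x i) ≤ θ * (L i + 1) := by
      calc δ * √(x i) = θ * (ε * √(x i)) := by simp only [θ]; field_simp
        _ ≤ θ * (L i + 1) :=
          mul_le_mul_of_nonneg_left (Nat.lt_floor_add_one _).le (div_nonneg hδ hε.le)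
    calc P.real {ω | ∑ k ∈ Ioc m (m + L i), X k ω ≤ δ * √(x i)}
        ≤ exp (-t * (δ * √(x i))) * mgf (X 0) P t ^ L i := by
          simpa using measureReal_sum_le_le_exp_mul_mgf_pow hmeas hindep hident ht.le hexp
            (Ioc m (m + L i)) (δ * √(x i))
      _ ≤ exp (-t * (θ * (L i + 1))) * mgf (X 0) P t ^ L i :=
          mul_le_mul_of_nonneg_right (exp_le_exp.2 (by nlinarith))
            (pow_nonneg (mgf_pos hexp).le _)
      _ = C * ρ ^ L i := by
          rw [mul_pow, ← mul_assoc C, ← pow_succ', ← exp_nat_mul]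
          push_cast
          ring_nf
  have hbad : ∀ i, P.real {ω | ∀ m ≤ ⌊a * x i⌋₊,
      δ * √(x i) ≤ ∑ k ∈ Ioc m (m + L i), X k ω}ᶜ ≤ C * (((⌊a * x i⌋₊ : ℝ) + 1) * ρ ^ L i) := by
    intro i
    calc _ ≤ P.real (⋃ m ∈ range (⌊a * x i⌋₊ + 1),
          {ω | ∑ k ∈ Ioc m (m + L i), X k ω ≤ δ * √(x i)}) := by
          refine measureReal_mono (fun ω hω => ?_) (measure_ne_top _ _)
          simp only [Set.mem_compl_iff, Set.mem_ofPred_eq, not_forall, not_le] at hω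
          obtain ⟨m, hm, hlt⟩ := hω
          exact Set.mem_biUnion (mem_range.2 (Nat.lt_succ_of_le hm)) hlt.le
      _ ≤ ∑ m ∈ range (⌊a * x i⌋₊ + 1), C * ρ ^ L i :=
          (measureReal_biUnion_finset_le _ _).trans (sum_le_sum fun m _ => hwindow i m)
      _ = C * (((⌊a * x i⌋₊ : ℝ) + 1) * ρ ^ L i) := by
          simp only [sum_const, card_range, nsmul_eq_mul, Nat.cast_add, Nat.cast_one]
          ring
  refine tendsto_measure_of_tendsto_measureReal_compl ?_
  refine tendsto_of_tendsto_of_tendsto_of_le_of_le tendsto_const_nhds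
    (by simpa using (tendsto_floor_add_one_mul_pow_floor_sqrt hx ha hε hρ0 hρ1).const_mul C)
    (fun i => measureReal_nonneg) hbad

end

def thinned (p : ℝ × ℕ) : ℝ := p.1 * if p.2 = 1 then 1 else 0

lemma measurable_thinned : Measurable thinned :=
  measurable_fst.mul (Measurable.ite (measurable_snd (measurableSet_singleton 1))
    measurable_const measurable_const)

lemma thinned_nonneg {p : ℝ × ℕ} (hp : 0 ≤ p.1) : 0 ≤ thinned p :=
  mul_nonneg hp (by split_ifs <;> norm_num)

lemma norm_thinned_le (p : ℝ × ℕ) : ‖thinned p‖ ≤ ‖p.1‖ := by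
  rw [thinned, norm_mul]
  split_ifs <;> simp

lemma integral_ite_eq_one_bern {r : ℝ} (hr0 : 0 ≤ r) (hr1 : r ≤ 1) :
    ∫ j, (if j = 1 then (1 : ℝ) else 0) ∂bern r = r := by
  have hint : ∀ (n : ℕ) (c : ℝ), Integrable (fun j : ℕ => if j = 1 then (1 : ℝ) else 0)
      (ENNReal.ofReal c • Measure.dirac n) := fun n c =>
    (integrable_dirac enorm_lt_top).smul_measure ENNReal.ofReal_ne_top
  rw [bern, integral_add_measure (hint _ _) (hint _ _),
    integral_smul_measure, integral_smul_measure, integral_dirac, integral_dirac,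
    ENNReal.toReal_ofReal hr0, ENNReal.toReal_ofReal (by linarith)]
  norm_num

lemma integral_thinned_prod_bern (ν : Measure ℝ) [SFinite ν] {q : ℝ} (hq0 : 0 ≤ q)
    (hq1 : q ≤ 1) : ∫ p, thinned p ∂ν.prod (bern q) = (∫ x, x ∂ν) * q := by
  have h := integral_prod_mul (μ := ν) (ν := bern q) (fun x : ℝ => x)
    (fun j : ℕ => if j = 1 then (1 : ℝ) else 0)
  rwa [integral_ite_eq_one_bern hq0 hq1] at h

lemma Stilde_add_sub (η : ℕ → Ω → ℝ) (J : ℕ → Ω → ℕ) (m L : ℕ) (ω : Ω) :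
    Stilde η J (m + L) ω - Stilde η J m ω = ∑ k ∈ Ioc m (m + L), thinned (η k ω, J k ω) := by
  have hIcc : ∀ r, Icc 1 r = Ioc 0 r := Icc_add_one_left_eq_Ioc 0
  simp only [Stilde, thinned, hIcc]
  rw [sub_eq_iff_eq_add', sum_Ioc_consecutive _ (Nat.zero_le m) (Nat.le_add_right m L)]

theorem min_increment_of_thinned_walk_general
    {Ω : Type*} [MeasurableSpace Ω] (P : Measure Ω) [IsProbabilityMeasure P]
    (η : ℕ → Ω → ℝ) (J : ℕ → Ω → ℕ) (q : ℝ) (hq : 0 < q ∧ q ≤ 1)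
    (hmeas : ∀ k, Measurable fun ω => (η k ω, J k ω))
    (hnonneg : ∀ k ω, 0 ≤ η k ω)
    (hindep : iIndepFun (fun k ω => (η k ω, J k ω)) P)
    (hlaw : ∀ k, Measure.map (fun ω => (η k ω, J k ω)) P
      = (Measure.map (η 1) P).prod (bern q))
    (hint : Integrable (η 1) P)
    (mη : ℝ) (hmη : mη = ∫ ω, η 1 ω ∂P)
    (c : ℕ → ℕ)
    (hunbdd : Tendsto c atTop atTop) :
    ∀ a : ℝ, 0 < a → ∀ ε : ℝ, 0 < ε → ∀ δ : ℝ, 0 < δ → δ < ε * q * mη →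
      Tendsto (fun n : ℕ =>
          P {ω | ∀ m ≤ ⌊a * (c n : ℝ)⌋₊,
              δ * Real.sqrt (c n) ≤
                Stilde η J (m + ⌊ε * Real.sqrt (c n)⌋₊) ω - Stilde η J m ω})
        atTop (𝓝 1) := by
  intro a ha ε hε δ hδ hδlt
  set X : ℕ → Ω → ℝ := fun k ω => thinned (η k ω, J k ω)
  have hident : ∀ k, IdentDistrib (X k) (X 0) P P := fun k =>
    (⟨(hmeas k).aemeasurable, (hmeas 0).aemeasurable, (hlaw k).trans (hlaw 0).symm⟩ :
      IdentDistrib _ _ P P).comp measurable_thinned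
  have hint0 : Integrable (X 0) P := (hident 1).integrable_iff.1 <|
    hint.mono (measurable_thinned.comp (hmeas 1)).aestronglyMeasurable
      (ae_of_all _ fun ω => norm_thinned_le _)
  have hmean : P[X 0] = q * mη := by
    have hη1 : Measurable (η 1) := (hmeas 1).fst
    rw [← integral_map (hmeas 0).aemeasurable measurable_thinned.aestronglyMeasurable, hlaw 0,
      integral_thinned_prod_bern _ hq.1.le hq.2,
      integral_map (f := fun x => x) hη1.aemeasurable aestronglyMeasurable_id, hmη, mul_comm]
  have key := tendsto_measure_forall_le_sum_Ioc (X := X)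
    (fun k => measurable_thinned.comp (hmeas k))
    (ae_of_all _ fun ω => thinned_nonneg (hnonneg 0 ω))
    (hindep.comp (fun _ => thinned) fun _ => measurable_thinned) hident hint0
    (tendsto_natCast_atTop_atTop.comp hunbdd) ha.le hε hδ.le (by rwa [hmean, ← mul_assoc])
  simpa only [Stilde_add_sub, Function.comp_apply, X] using key

/-- **Uniform lower bound on increments of the thinned random walk:** if `(η_k)` are i.i.d.
nonnegative with mean `m^η ∈ (0,∞)`, `(J_k)` are i.i.d. Bernoulli(`q`), `q ∈ (0,1]`,
independent of `(η_k)`, and `(c_n)` is a nondecreasing unbounded sequence of positive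
integers, then for all `a > 0`, `ε > 0` and `δ ∈ (0, ε q m^η)`,
`P(min_{0 ≤ m ≤ ⌊a c_n⌋} (S̃_{m + ⌊ε √c_n⌋} - S̃_m) ≥ δ √c_n) → 1`. -/
theorem min_increment_of_thinned_walk
    {Ω : Type*} [MeasurableSpace Ω] (P : Measure Ω) [IsProbabilityMeasure P]
    (η : ℕ → Ω → ℝ) (J : ℕ → Ω → ℕ) (q : ℝ) (hq : 0 < q ∧ q ≤ 1)
    (hmeas : ∀ k, Measurable fun ω => (η k ω, J k ω))
    (hnonneg : ∀ k ω, 0 ≤ η k ω)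
    (hindep : iIndepFun (fun k ω => (η k ω, J k ω)) P)
    (hlaw : ∀ k, Measure.map (fun ω => (η k ω, J k ω)) P
      = (Measure.map (η 1) P).prod (bern q))
    (hint : Integrable (η 1) P)
    (mη : ℝ) (hmη : mη = ∫ ω, η 1 ω ∂P) (hmηpos : 0 < mη)
    (c : ℕ → ℕ) (hcpos : ∀ n, 0 < c n) (hmono : Monotone c)
    (hunbdd : Tendsto c atTop atTop) :
    ∀ a : ℝ, 0 < a → ∀ ε : ℝ, 0 < ε → ∀ δ : ℝ, 0 < δ → δ < ε * q * mη →
      Tendsto (fun n : ℕ =>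
          P {ω | ∀ m ≤ ⌊a * (c n : ℝ)⌋₊,
              δ * Real.sqrt (c n) ≤
                Stilde η J (m + ⌊ε * Real.sqrt (c n)⌋₊) ω - Stilde η J m ω})
        atTop (𝓝 1) :=
  min_increment_of_thinned_walk_general P η J q hq hmeas hnonneg hindep hlaw hint mη hmη c hunbdd

end ABTest
end
end

section
/- Let p, p_θ ∈ (0,1) and d_2, d_3 ∈ ℝ, and let (G_1,G_2,G_3) be a centered Gaussian vector in ℝ³ with covariance matrix V_1. Then Var(p_θ G_1 − p G_2 + (1−p) G_3) = p_θ(1−p_θ) p (1−p), and the random variable (d_2 + G_2 − p_θ G_1 − (1−p)(d_2+d_3+G_2+G_3))² / ((1−p_θ)p_θ(1−p)) + (d_3 + G_3 + p_θ G_1 − p(d_2+d_3+G_2+G_3))² / ((1−p_θ)p_θ p) has the same distribution as (𝒩 − (p d_2 − (1−p) d_3)/√(p p_θ (1−p)(1−p_θ)))², where 𝒩 is a standard normal random variable. -/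
/-! The combination `L = pθ G₁ - p G₂ + (1 - p) G₃` has variance `aᵀ V₁ a = pθ (1 - pθ) p (1 - p)`,
which is `σ²` for `σ = √(p pθ (1 - p) (1 - pθ))`, so `L / σ` is standard normal. The two residuals
of the statistic are `∓(L - c)` with `c = p d₂ - (1 - p) d₃`, and their weights add up to `1 / σ²`;
hence the statistic is `(L / σ - c / σ)²`. -/

open MeasureTheory ProbabilityTheory Filter Finset Topology

noncomputable section

namespace ABTest

/-- `G` is a centered Gaussian random vector with covariance matrix `V` under `P'`:
every linear combination `⟨a, G⟩` has law `N(0, aᵀ V a)`. -/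
def IsCenteredGaussian {Ω' : Type*} [MeasurableSpace Ω'] (P' : Measure Ω') {n : ℕ}
    (G : Ω' → Fin n → ℝ) (V : Matrix (Fin n) (Fin n) ℝ) : Prop :=
  (∀ i, Measurable fun ω => G ω i) ∧
    ∀ a : Fin n → ℝ,
      Measure.map (fun ω => ∑ i, a i * G ω i) P' =
        gaussianReal 0 (Real.toNNReal (∑ i, ∑ j, a i * (V i j * a j)))

def V1 (p pθ : ℝ) : Matrix (Fin 3) (Fin 3) ℝ :=
  !![p * (1 - p), p * (1 - p) * pθ, -(p * (1 - p) * pθ);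
     p * (1 - p) * pθ, pθ * (1 - p) * (1 - pθ * (1 - p)), -(p * (1 - p) * pθ ^ 2);
     -(p * (1 - p) * pθ), -(p * (1 - p) * pθ ^ 2), p * pθ * (1 - p * pθ)]

lemma map_inv_mul_eq_gaussianReal_zero_one {Ω : Type*} [MeasurableSpace Ω] {P : Measure Ω}
    {X : Ω → ℝ} (hX : AEMeasurable X P) {v : NNReal} (hXv : P.map X = gaussianReal 0 v)
    {σ : ℝ} (hσ : σ ≠ 0) (hσv : σ ^ 2 = v) :
    P.map (fun ω => σ⁻¹ * X ω) = gaussianReal 0 1 := by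
  have hcomp : (fun ω => σ⁻¹ * X ω) = (σ⁻¹ * ·) ∘ X := rfl
  rw [hcomp, ← AEMeasurable.map_map_of_aemeasurable (by fun_prop) hX, hXv,
    gaussianReal_map_const_mul, mul_zero]
  congr 1
  ext
  simp [← hσv, hσ]

namespace IsCenteredGaussian

variable {Ω : Type*} [MeasurableSpace Ω] {P : Measure Ω} {n : ℕ} {G : Ω → Fin n → ℝ}
  {V : Matrix (Fin n) (Fin n) ℝ}

lemma measurable_sum_mul (hG : IsCenteredGaussian P G V) (a : Fin n → ℝ) :
    Measurable fun ω => ∑ i, a i * G ω i :=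
  Finset.measurable_fun_sum _ fun i _ => (hG.1 i).const_mul (a i)

lemma variance_sum_mul (hG : IsCenteredGaussian P G V) (a : Fin n → ℝ) :
    variance (fun ω => ∑ i, a i * G ω i) P =
      Real.toNNReal (∑ i, ∑ j, a i * (V i j * a j)) := by
  rw [← variance_id_map (hG.measurable_sum_mul a).aemeasurable, hG.2 a,
    variance_id_gaussianReal]

end IsCenteredGaussian

lemma V1_quadForm (p pθ : ℝ) :
    ∑ i, ∑ j, ![pθ, -p, 1 - p] i * (V1 p pθ i j * ![pθ, -p, 1 - p] j) =
      pθ * (1 - pθ) * p * (1 - p) := by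
  simp only [V1, Fin.sum_univ_three, Matrix.of_apply, Matrix.cons_val', Matrix.cons_val_zero,
    Matrix.cons_val_one, Matrix.cons_val, Matrix.cons_val_fin_one]
  ring

lemma chiSq_statistic_eq {p pθ : ℝ} (hp : p ≠ 0) (hp' : 1 - p ≠ 0) (hpθ : pθ ≠ 0)
    (hpθ' : 1 - pθ ≠ 0) (d2 d3 g0 g1 g2 : ℝ) :
    (d2 + g1 - pθ * g0 - (1 - p) * (d2 + d3 + g1 + g2)) ^ 2 / ((1 - pθ) * pθ * (1 - p)) +
        (d3 + g2 + pθ * g0 - p * (d2 + d3 + g1 + g2)) ^ 2 / ((1 - pθ) * pθ * p) =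
      ((pθ * g0 - p * g1 + (1 - p) * g2) - (p * d2 - (1 - p) * d3)) ^ 2 /
        (p * pθ * (1 - p) * (1 - pθ)) := by
  field_simp
  ring

theorem chiSq_limit_law_identification_general
    {Ω' : Type*} [MeasurableSpace Ω'] (P' : Measure Ω')
    (p pθ : ℝ) (hp : 0 < p ∧ p < 1) (hpθ : 0 < pθ ∧ pθ < 1)
    (d2 d3 : ℝ) (G : Ω' → Fin 3 → ℝ)
    (hG : IsCenteredGaussian P' G (V1 p pθ)) :
    variance (fun ω => pθ * G ω 0 - p * G ω 1 + (1 - p) * G ω 2) P' =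
      pθ * (1 - pθ) * p * (1 - p) ∧
    Measure.map (fun ω =>
        (d2 + G ω 1 - pθ * G ω 0 - (1 - p) * (d2 + d3 + G ω 1 + G ω 2)) ^ 2 /
          ((1 - pθ) * pθ * (1 - p)) +
        (d3 + G ω 2 + pθ * G ω 0 - p * (d2 + d3 + G ω 1 + G ω 2)) ^ 2 /
          ((1 - pθ) * pθ * p)) P' =
      Measure.map (fun x =>
        (x - (p * d2 - (1 - p) * d3) / Real.sqrt (p * pθ * (1 - p) * (1 - pθ))) ^ 2)
        (gaussianReal 0 1) := by
  obtain ⟨hp0, hp1⟩ := hp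
  obtain ⟨hpθ0, hpθ1⟩ := hpθ
  set a : Fin 3 → ℝ := ![pθ, -p, 1 - p]
  have hL : ∀ ω, pθ * G ω 0 - p * G ω 1 + (1 - p) * G ω 2 = ∑ i, a i * G ω i := fun ω => by
    simp only [a, Fin.sum_univ_three, Matrix.cons_val_zero, Matrix.cons_val_one, Matrix.cons_val]
    ring
  have hvar : 0 < pθ * (1 - pθ) * p * (1 - p) :=
    mul_pos (mul_pos (mul_pos hpθ0 (sub_pos.2 hpθ1)) hp0) (sub_pos.2 hp1)
  refine ⟨by simp_rw [hL, hG.variance_sum_mul, a, V1_quadForm, Real.coe_toNNReal _ hvar.le], ?_⟩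
  set σ := Real.sqrt (p * pθ * (1 - p) * (1 - pθ))
  have hσ2 : σ ^ 2 = p * pθ * (1 - p) * (1 - pθ) := Real.sq_sqrt (by linarith)
  have hσ : σ ≠ 0 := Real.sqrt_ne_zero'.2 (by linarith)
  have hstd : P'.map (fun ω => σ⁻¹ * ∑ i, a i * G ω i) = gaussianReal 0 1 :=
    map_inv_mul_eq_gaussianReal_zero_one (hG.measurable_sum_mul a).aemeasurable (hG.2 a) hσ
      (by rw [V1_quadForm, Real.coe_toNNReal _ hvar.le, hσ2]; ring)
  rw [← hstd, Measure.map_map (by fun_prop) ((hG.measurable_sum_mul a).const_mul _)]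
  congr 1
  funext ω
  rw [chiSq_statistic_eq hp0.ne' (sub_pos.2 hp1).ne' hpθ0.ne' (sub_pos.2 hpθ1).ne', hL, ← hσ2,
    Function.comp_apply]
  field_simp

/-- **Identification of the limiting law of the chi-squared statistic.** For a centered
Gaussian vector `(G₁,G₂,G₃)` with covariance matrix `V₁`:
`Var(p_θ G₁ - p G₂ + (1-p) G₃) = p_θ(1-p_θ) p (1-p)`, and
`(d₂ + G₂ - p_θ G₁ - (1-p)(d₂+d₃+G₂+G₃))²/((1-p_θ)p_θ(1-p))
  + (d₃ + G₃ + p_θ G₁ - p(d₂+d₃+G₂+G₃))²/((1-p_θ)p_θ p)`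
has the same law as `(𝒩 - (p d₂ - (1-p) d₃)/√(p p_θ (1-p)(1-p_θ)))²` for `𝒩` standard
normal. -/
theorem chiSq_limit_law_identification
    {Ω' : Type*} [MeasurableSpace Ω'] (P' : Measure Ω') [IsProbabilityMeasure P']
    (p pθ : ℝ) (hp : 0 < p ∧ p < 1) (hpθ : 0 < pθ ∧ pθ < 1)
    (d2 d3 : ℝ) (G : Ω' → Fin 3 → ℝ)
    (hG : IsCenteredGaussian P' G (V1 p pθ)) :
    variance (fun ω => pθ * G ω 0 - p * G ω 1 + (1 - p) * G ω 2) P' =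
      pθ * (1 - pθ) * p * (1 - p) ∧
    Measure.map (fun ω =>
        (d2 + G ω 1 - pθ * G ω 0 - (1 - p) * (d2 + d3 + G ω 1 + G ω 2)) ^ 2 /
          ((1 - pθ) * pθ * (1 - p)) +
        (d3 + G ω 2 + pθ * G ω 0 - p * (d2 + d3 + G ω 1 + G ω 2)) ^ 2 /
          ((1 - pθ) * pθ * p)) P' =
      Measure.map (fun x =>
        (x - (p * d2 - (1 - p) * d3) / Real.sqrt (p * pθ * (1 - p) * (1 - pθ))) ^ 2)
        (gaussianReal 0 1) :=
  chiSq_limit_law_identification_general P' p pθ hp hpθ d2 d3 G hG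

end ABTest
end
end
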